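/- Let ω(ξ,η) = ξ²·coth(ξ) − ξ − η²/ξ (defined for ξ ≠ 0) and for points k₁ = (ξ₁,η₁), k₂ = (ξ₂,η₂) define the resonance function Ω(k₁,k₂) = ω(ξ₁,η₁) + ω(ξ₂,η₂) + ω(−ξ₁−ξ₂, −η₁−η₂). Then for all real ξ₁, ξ₂, η₁, η₂ with ξ₁ ≠ 0, ξ₂ ≠ 0 and ξ₁+ξ₂ ≠ 0, one has the identity Ω(k₁,k₂) = −ξ₁ξ₂(ξ₁+ξ₂)·[ ((ξ₁+ξ₂)²coth(ξ₁+ξ₂) − ξ₁²coth(ξ₁) − ξ₂²coth(ξ₂))/(ξ₁ξ₂(ξ₁+ξ₂)) + (η₁/ξ₁ − η₂/ξ₂)²/(ξ₁+ξ₂)² ]. -/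
import Mathlib


/-- Hyperbolic cotangent. -/
noncomputable def coth (x : ℝ) : ℝ := Real.cosh x / Real.sinh x

lemma coth_neg (x : ℝ) : coth (-x) = -coth x := by
  simp [coth, Real.cosh_neg, Real.sinh_neg, neg_div, div_neg]

/-- Dispersion relation of the depth-1 Camassa–Choi equation. -/
noncomputable def omega1 (ξ η : ℝ) : ℝ := ξ ^ 2 * coth ξ - ξ - η ^ 2 / ξ

theorem resonance_identity_finite_depth
    (ξ₁ ξ₂ η₁ η₂ : ℝ) (h1 : ξ₁ ≠ 0) (h2 : ξ₂ ≠ 0) (h12 : ξ₁ + ξ₂ ≠ 0) :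
    omega1 ξ₁ η₁ + omega1 ξ₂ η₂ + omega1 (-(ξ₁ + ξ₂)) (-(η₁ + η₂)) =
      -(ξ₁ * ξ₂ * (ξ₁ + ξ₂)) *
        (((ξ₁ + ξ₂) ^ 2 * coth (ξ₁ + ξ₂) - ξ₁ ^ 2 * coth ξ₁ - ξ₂ ^ 2 * coth ξ₂) /
            (ξ₁ * ξ₂ * (ξ₁ + ξ₂)) +
          (η₁ / ξ₁ - η₂ / ξ₂) ^ 2 / (ξ₁ + ξ₂) ^ 2) := by
  unfold omega1
  rw [coth_neg]
  simp only [neg_sq, div_neg, neg_neg]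
  field_simp
  ring
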